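/- arXiv:2512.03254 — 5 statements merged into one kernel-verified Lean document; each statement's English description precedes it below -/
import Mathlib

section
/- Exact bias decomposition of the one-step variance estimator: with fixed nuisance functions gₙ, Q̄ₙ, Q̄ₙ² and scalar μₙ, and with gₙ(W) > 0 a.s., E[(A/gₙ(W))(Y² − 2Yμₙ + 2Q̄ₙ(W,1)μₙ − Q̄ₙ²(W,1)) + Q̄ₙ²(W,1) − 2Q̄ₙ(W,1)μₙ + μₙ² − σ²(1)] = E[ ((g(W) − gₙ(W))/gₙ(W))·(Q̄²(W,1) − Q̄ₙ²(W,1)) + 2μₙ·((g(W) − gₙ(W))/gₙ(W))·(Q̄ₙ(W,1) − Q̄(W,1)) ] + (μₙ − μ(1))², where g(W) = P(A=1|W), Q̄ᵈ(W,1) = E[Yᵈ|W,A=1], μ(1) = E[Q̄(W,1)], σ²(1) = E[Q̄²(W,1)] − μ(1)². -/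
open MeasureTheory ProbabilityTheory

private def mw {Ω 𝓦 : Type*} [m𝓦 : MeasurableSpace 𝓦] (W : Ω → 𝓦) : MeasurableSpace Ω :=
  MeasurableSpace.comap W m𝓦

/-- Exact bias decomposition of the one-step variance estimator: with fixed nuisance
functions `gₙ, Q̄ₙ, Q̄ₙ²` (bounded away from zero for `gₙ`) and scalar `μₙ`,
`E[(A/gₙ(W))(Y² − 2Yμₙ + 2Q̄ₙ(W,1)μₙ − Q̄ₙ²(W,1)) + Q̄ₙ²(W,1) − 2Q̄ₙ(W,1)μₙ + μₙ² − σ²(1)]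
 = E[((g−gₙ)/gₙ)(Q̄² − Q̄ₙ²) + 2μₙ((g−gₙ)/gₙ)(Q̄ₙ − Q̄)] + (μₙ − μ(1))²`,
where `g(W) = P(A=1|W)`, `Q̄ᵈ(W,1) = E[Yᵈ|W,A=1]`, `μ(1) = E[Q̄(W,1)]`, and
`σ²(1) = E[Q̄²(W,1)] − μ(1)²`. -/
theorem stmt_8 {Ω 𝓦 : Type*} [MeasurableSpace Ω] [MeasurableSpace 𝓦]
    (μ : Measure Ω) [IsProbabilityMeasure μ]
    (W : Ω → 𝓦) (A Y : Ω → ℝ)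
    (hW : Measurable W) (hA : Measurable A) (hY : Measurable Y)
    (hAbin : ∀ ω, A ω = 0 ∨ A ω = 1)
    (C : ℝ) (hYb : ∀ ω, |Y ω| ≤ C)
    -- the true propensity score g(W) = P(A = 1 | W)
    (g : 𝓦 → ℝ) (hg : Measurable g) (hgb : ∀ w, g w ∈ Set.Icc (0 : ℝ) 1)
    (hgchar : ∀ S : Set 𝓦, MeasurableSet S →
      ∫ ω in W ⁻¹' S, A ω ∂μ = ∫ ω in W ⁻¹' S, g (W ω) ∂μ)
    -- true outcome regressions Q1 = E[Y|W,A=1], Q2 = E[Y²|W,A=1]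
    (Q1 Q2 : 𝓦 → ℝ) (hQ1m : Measurable Q1) (hQ2m : Measurable Q2)
    (hQ1int : Integrable (fun ω => Q1 (W ω)) μ) (hQ2int : Integrable (fun ω => Q2 (W ω)) μ)
    (hQ1char : ∀ S : Set 𝓦, MeasurableSet S →
      ∫ ω in W ⁻¹' S ∩ {ω | A ω = 1}, Y ω ∂μ
        = ∫ ω in W ⁻¹' S ∩ {ω | A ω = 1}, Q1 (W ω) ∂μ)
    (hQ2char : ∀ S : Set 𝓦, MeasurableSet S →
      ∫ ω in W ⁻¹' S ∩ {ω | A ω = 1}, (Y ω) ^ 2 ∂μ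
        = ∫ ω in W ⁻¹' S ∩ {ω | A ω = 1}, Q2 (W ω) ∂μ)
    -- candidate nuisance functions, with gₙ bounded away from zero
    (gn Qn1 Qn2 : 𝓦 → ℝ) (hgnm : Measurable gn) (hQn1m : Measurable Qn1)
    (hQn2m : Measurable Qn2)
    (c : ℝ) (hc : 0 < c) (hgn : ∀ᵐ ω ∂μ, c ≤ gn (W ω))
    (hQn1int : Integrable (fun ω => Qn1 (W ω)) μ)
    (hQn2int : Integrable (fun ω => Qn2 (W ω)) μ)
    (μn : ℝ)
    -- μ(1) and σ²(1)
    (μ1 σ2 : ℝ) (hμ1 : μ1 = ∫ ω, Q1 (W ω) ∂μ)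
    (hσ2 : σ2 = ∫ ω, Q2 (W ω) ∂μ - μ1 ^ 2) :
    ∫ ω, ((A ω / gn (W ω))
        * ((Y ω) ^ 2 - 2 * Y ω * μn + 2 * Qn1 (W ω) * μn - Qn2 (W ω))
      + Qn2 (W ω) - 2 * Qn1 (W ω) * μn + μn ^ 2 - σ2) ∂μ
      = (∫ ω, ((g (W ω) - gn (W ω)) / gn (W ω) * (Q2 (W ω) - Qn2 (W ω))
          + 2 * μn * ((g (W ω) - gn (W ω)) / gn (W ω)) * (Qn1 (W ω) - Q1 (W ω))) ∂μ)
        + (μn - μ1) ^ 2 := by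
  classical
  have hA1 : ∀ ω, |A ω| ≤ 1 := fun ω => by rcases hAbin ω with h | h <;> simp [h]
  have hm : mw W ≤ _ := hW.comap_le
  haveI : SigmaFinite (μ.trim hm) := inferInstance
  have hWm : Measurable[mw W] W := Measurable.of_comap_le le_rfl
  have hsm : ∀ (ψ : 𝓦 → ℝ), Measurable ψ → StronglyMeasurable[mw W] fun ω => ψ (W ω) :=
    fun ψ hψ => (hψ.comp hWm).stronglyMeasurable
  have hAint : Integrable A μ :=
    (integrable_const (1 : ℝ)).mono' hA.aestronglyMeasurable
      (Filter.Eventually.of_forall fun ω => by rw [Real.norm_eq_abs]; exact hA1 ω)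
  have hgWint : Integrable (fun ω => g (W ω)) μ :=
    (integrable_const (1 : ℝ)).mono' (hg.comp hW).aestronglyMeasurable
      (Filter.Eventually.of_forall fun ω => by
        rw [Real.norm_eq_abs, abs_of_nonneg (hgb (W ω)).1]; exact (hgb (W ω)).2)
  have hcondA : (fun ω => g (W ω)) =ᵐ[μ] μ[A|mw W] := by
    refine ae_eq_condExp_of_forall_setIntegral_eq hm hAint
      (fun s _ _ => hgWint.integrableOn) (fun s hs _ => ?_)
      ((hsm g hg).aestronglyMeasurable)
    obtain ⟨S, hS, rfl⟩ := hs
    exact (hgchar S hS).symm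
  -- transfer lemma: E[A ψ(W)] = E[g(W) ψ(W)]
  have H : ∀ ψ : 𝓦 → ℝ, Measurable ψ → Integrable (fun ω => ψ (W ω)) μ →
      ∫ ω, A ω * ψ (W ω) ∂μ = ∫ ω, g (W ω) * ψ (W ω) ∂μ := by
    intro ψ hψ hψint
    have hmul : Integrable (fun ω => ψ (W ω) * A ω) μ :=
      hψint.abs.mono' ((hψ.comp hW).mul hA).aestronglyMeasurable
        (Filter.Eventually.of_forall fun ω => by
          rw [Real.norm_eq_abs, abs_mul]
          exact mul_le_of_le_one_right (abs_nonneg _) (hA1 ω))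
    have h1 := condExp_mul_of_stronglyMeasurable_left (μ := μ) (hsm ψ hψ) hmul hAint
    calc ∫ ω, A ω * ψ (W ω) ∂μ
        = ∫ ω, ψ (W ω) * A ω ∂μ :=
          integral_congr_ae (Filter.Eventually.of_forall fun ω => mul_comm _ _)
      _ = ∫ ω, (μ[(fun ω => ψ (W ω)) * A|mw W]) ω ∂μ := (integral_condExp hm).symm
      _ = ∫ ω, ((fun ω => ψ (W ω)) * μ[A|mw W]) ω ∂μ := integral_congr_ae h1
      _ = ∫ ω, g (W ω) * ψ (W ω) ∂μ := by
          refine integral_congr_ae ?_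
          filter_upwards [hcondA] with ω h
          simp only [Pi.mul_apply]
          rw [← h, mul_comm]
  have hMA : MeasurableSet {ω | A ω = 1} := hA (measurableSet_singleton 1)
  have hAind : ∀ (F : Ω → ℝ) (ω : Ω), A ω * F ω = Set.indicator {ω | A ω = 1} F ω :=
    fun F ω => by rcases hAbin ω with h0 | h0 <;> simp [Set.indicator_apply, Set.mem_setOf_eq, h0]
  have hred : ∀ (F : Ω → ℝ) (s : Set Ω),
      ∫ ω in s, A ω * F ω ∂μ = ∫ ω in s ∩ {ω | A ω = 1}, F ω ∂μ := by
    intro F s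
    calc ∫ ω in s, A ω * F ω ∂μ
        = ∫ ω in s, Set.indicator {ω | A ω = 1} F ω ∂μ :=
          integral_congr_ae (Filter.Eventually.of_forall fun ω => hAind F ω)
      _ = _ := setIntegral_indicator hMA
  -- generic conditional expectation identification
  have CORE : ∀ (Z : Ω → ℝ) (Q : 𝓦 → ℝ) (D : ℝ), Measurable Z → (∀ ω, |Z ω| ≤ D) →
      Measurable Q → Integrable (fun ω => Q (W ω)) μ →
      (∀ S : Set 𝓦, MeasurableSet S →
        ∫ ω in W ⁻¹' S ∩ {ω | A ω = 1}, Z ω ∂μ = ∫ ω in W ⁻¹' S ∩ {ω | A ω = 1}, Q (W ω) ∂μ) →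
      (fun ω => g (W ω) * Q (W ω)) =ᵐ[μ] μ[fun ω => A ω * Z ω|mw W] := by
    intro Z Q D hZm hZb hQm hQint hchar
    have hAZint : Integrable (fun ω => A ω * Z ω) μ :=
      (integrable_const D).mono' (hA.mul hZm).aestronglyMeasurable
        (Filter.Eventually.of_forall fun ω => by
          rw [Real.norm_eq_abs, abs_mul]
          exact le_trans (mul_le_of_le_one_left (abs_nonneg _) (hA1 ω)) (hZb ω))
    have hgQint : Integrable (fun ω => g (W ω) * Q (W ω)) μ :=
      hQint.abs.mono' ((hg.comp hW).mul (hQm.comp hW)).aestronglyMeasurable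
        (Filter.Eventually.of_forall fun ω => by
          rw [Real.norm_eq_abs, abs_mul]
          refine mul_le_of_le_one_left (abs_nonneg _) (abs_le.mpr ⟨?_, (hgb (W ω)).2⟩)
          linarith [(hgb (W ω)).1])
    refine ae_eq_condExp_of_forall_setIntegral_eq hm hAZint
      (fun s _ _ => hgQint.integrableOn) (fun s hs _ => ?_)
      (((hsm g hg).mul (hsm Q hQm)).aestronglyMeasurable)
    obtain ⟨S, hS, rfl⟩ := hs
    have hindint : Integrable (fun ω => S.indicator Q (W ω)) μ := by
      refine (hQint.indicator (hW hS)).congr (Filter.Eventually.of_forall fun ω => ?_)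
      by_cases hω : W ω ∈ S <;> simp [Set.indicator_apply, hω]
    have e1 : ∫ ω in W ⁻¹' S, g (W ω) * Q (W ω) ∂μ
        = ∫ ω, g (W ω) * S.indicator Q (W ω) ∂μ := by
      rw [← integral_indicator (hW hS)]
      refine integral_congr_ae (Filter.Eventually.of_forall fun ω => ?_)
      by_cases hω : W ω ∈ S <;> simp [Set.indicator_apply, hω]
    have e2 : ∫ ω, g (W ω) * S.indicator Q (W ω) ∂μ
        = ∫ ω, A ω * S.indicator Q (W ω) ∂μ :=
      (H (S.indicator Q) (hQm.indicator hS) hindint).symm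
    have e3 : ∫ ω, A ω * S.indicator Q (W ω) ∂μ = ∫ ω in W ⁻¹' S, A ω * Q (W ω) ∂μ := by
      rw [← integral_indicator (hW hS)]
      refine integral_congr_ae (Filter.Eventually.of_forall fun ω => ?_)
      by_cases hω : W ω ∈ S <;> simp [Set.indicator_apply, hω]
    calc ∫ ω in W ⁻¹' S, g (W ω) * Q (W ω) ∂μ
        = ∫ ω in W ⁻¹' S, A ω * Q (W ω) ∂μ := by rw [e1, e2, e3]
      _ = ∫ ω in W ⁻¹' S ∩ {ω | A ω = 1}, Q (W ω) ∂μ := hred _ _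
      _ = ∫ ω in W ⁻¹' S ∩ {ω | A ω = 1}, Z ω ∂μ := (hchar S hS).symm
      _ = ∫ ω in W ⁻¹' S, A ω * Z ω ∂μ := (hred _ _).symm
  -- integrability helper for (gn∘W)⁻¹ * (A * Z)
  have iAZ : ∀ (Z : Ω → ℝ) (D : ℝ), Measurable Z → (∀ ω, |Z ω| ≤ D) →
      Integrable (fun ω => (gn (W ω))⁻¹ * (A ω * Z ω)) μ := by
    intro Z D hZm hZb
    refine (integrable_const (c⁻¹ * D)).mono'
      (((hgnm.comp hW).inv).mul (hA.mul hZm)).aestronglyMeasurable ?_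
    filter_upwards [hgn] with ω h
    have h0 : (0 : ℝ) < gn (W ω) := lt_of_lt_of_le hc h
    rw [Real.norm_eq_abs, abs_mul]
    have h1 : |(gn (W ω))⁻¹| ≤ c⁻¹ := by
      rw [abs_of_pos (inv_pos.mpr h0)]; exact inv_anti₀ hc h
    have h2 : |A ω * Z ω| ≤ D := by
      rw [abs_mul]; exact le_trans (mul_le_of_le_one_left (abs_nonneg _) (hA1 ω)) (hZb ω)
    exact mul_le_mul h1 h2 (abs_nonneg _) (inv_nonneg.mpr hc.le)
  -- key identity for outcomes
  have K : ∀ (Z : Ω → ℝ) (Q : 𝓦 → ℝ) (D : ℝ), Measurable Z → (∀ ω, |Z ω| ≤ D) →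
      Measurable Q → Integrable (fun ω => Q (W ω)) μ →
      (∀ S : Set 𝓦, MeasurableSet S →
        ∫ ω in W ⁻¹' S ∩ {ω | A ω = 1}, Z ω ∂μ = ∫ ω in W ⁻¹' S ∩ {ω | A ω = 1}, Q (W ω) ∂μ) →
      ∫ ω, (gn (W ω))⁻¹ * (A ω * Z ω) ∂μ
        = ∫ ω, (gn (W ω))⁻¹ * (g (W ω) * Q (W ω)) ∂μ := by
    intro Z Q D hZm hZb hQm hQint hchar
    have hcore := CORE Z Q D hZm hZb hQm hQint hchar
    have hAZint : Integrable (fun ω => A ω * Z ω) μ :=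
      (integrable_const D).mono' (hA.mul hZm).aestronglyMeasurable
        (Filter.Eventually.of_forall fun ω => by
          rw [Real.norm_eq_abs, abs_mul]
          exact le_trans (mul_le_of_le_one_left (abs_nonneg _) (hA1 ω)) (hZb ω))
    have hφsm : StronglyMeasurable[mw W] (fun ω => (gn (W ω))⁻¹) := hsm _ hgnm.inv
    have hint := iAZ Z D hZm hZb
    have h1 := condExp_mul_of_stronglyMeasurable_left (μ := μ) hφsm hint hAZint
    calc ∫ ω, (gn (W ω))⁻¹ * (A ω * Z ω) ∂μ
        = ∫ ω, (μ[(fun ω => (gn (W ω))⁻¹) * (fun ω => A ω * Z ω)|mw W]) ω ∂μ :=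
          (integral_condExp hm).symm
      _ = ∫ ω, ((fun ω => (gn (W ω))⁻¹) * μ[fun ω => A ω * Z ω|mw W]) ω ∂μ :=
          integral_congr_ae h1
      _ = ∫ ω, (gn (W ω))⁻¹ * (g (W ω) * Q (W ω)) ∂μ := by
          refine integral_congr_ae ?_
          filter_upwards [hcore] with ω h
          simp only [Pi.mul_apply]
          rw [← h]
  have K2 : ∫ ω, (gn (W ω))⁻¹ * (A ω * Y ω ^ 2) ∂μ
      = ∫ ω, (gn (W ω))⁻¹ * (g (W ω) * Q2 (W ω)) ∂μ :=
    K (fun ω => Y ω ^ 2) Q2 (C ^ 2) (hY.pow_const 2)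
      (fun ω => by rw [abs_pow]; exact pow_le_pow_left₀ (abs_nonneg _) (hYb ω) 2)
      hQ2m hQ2int hQ2char
  have K1 : ∫ ω, (gn (W ω))⁻¹ * (A ω * Y ω) ∂μ
      = ∫ ω, (gn (W ω))⁻¹ * (g (W ω) * Q1 (W ω)) ∂μ :=
    K Y Q1 C hY hYb hQ1m hQ1int hQ1char
  -- integrability of quotient nuisances and the transfer for them
  have hψint : ∀ (Qq : 𝓦 → ℝ), Measurable Qq → Integrable (fun ω => Qq (W ω)) μ →
      Integrable (fun ω => Qq (W ω) / gn (W ω)) μ := by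
    intro Qq hQqm hQqint
    refine (hQqint.abs.const_mul c⁻¹).mono'
      ((hQqm.comp hW).div (hgnm.comp hW)).aestronglyMeasurable ?_
    filter_upwards [hgn] with ω h
    have h0 : (0 : ℝ) < gn (W ω) := lt_of_lt_of_le hc h
    have hq : |Qq (W ω) / gn (W ω)| = |Qq (W ω)| * (gn (W ω))⁻¹ := by
      rw [div_eq_mul_inv, abs_mul, abs_of_pos (inv_pos.mpr h0)]
    rw [Real.norm_eq_abs, hq, mul_comm (c⁻¹)]
    exact mul_le_mul_of_nonneg_left (inv_anti₀ hc h) (abs_nonneg _)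
  have HQ1 : ∫ ω, A ω * (Qn1 (W ω) / gn (W ω)) ∂μ
      = ∫ ω, g (W ω) * (Qn1 (W ω) / gn (W ω)) ∂μ :=
    H _ (hQn1m.div hgnm) (hψint Qn1 hQn1m hQn1int)
  have HQ2 : ∫ ω, A ω * (Qn2 (W ω) / gn (W ω)) ∂μ
      = ∫ ω, g (W ω) * (Qn2 (W ω) / gn (W ω)) ∂μ :=
    H _ (hQn2m.div hgnm) (hψint Qn2 hQn2m hQn2int)
  have cb1 : ∫ ω, g (W ω) * (Qn1 (W ω) / gn (W ω)) ∂μ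
      = ∫ ω, (gn (W ω))⁻¹ * (g (W ω) * Qn1 (W ω)) ∂μ :=
    integral_congr_ae (Filter.Eventually.of_forall fun ω => by ring)
  have cb2 : ∫ ω, g (W ω) * (Qn2 (W ω) / gn (W ω)) ∂μ
      = ∫ ω, (gn (W ω))⁻¹ * (g (W ω) * Qn2 (W ω)) ∂μ :=
    integral_congr_ae (Filter.Eventually.of_forall fun ω => by ring)
  -- integrability of all pieces
  have ibase : ∀ (Qq : 𝓦 → ℝ), Measurable Qq → Integrable (fun ω => Qq (W ω)) μ →
      Integrable (fun ω => (gn (W ω))⁻¹ * (g (W ω) * Qq (W ω))) μ := by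
    intro Qq hQqm hQqint
    refine (hQqint.abs.const_mul c⁻¹).mono'
      ((hgnm.comp hW).inv.mul ((hg.comp hW).mul (hQqm.comp hW))).aestronglyMeasurable ?_
    filter_upwards [hgn] with ω h
    have h0 : (0 : ℝ) < gn (W ω) := lt_of_lt_of_le hc h
    rw [Real.norm_eq_abs, abs_mul, abs_mul]
    have h1 : |(gn (W ω))⁻¹| ≤ c⁻¹ := by
      rw [abs_of_pos (inv_pos.mpr h0)]; exact inv_anti₀ hc h
    have h2 : |g (W ω)| * |Qq (W ω)| ≤ |Qq (W ω)| := by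
      refine mul_le_of_le_one_left (abs_nonneg _) (abs_le.mpr ⟨?_, (hgb (W ω)).2⟩)
      linarith [(hgb (W ω)).1]
    exact mul_le_mul h1 h2 (by positivity) (inv_nonneg.mpr hc.le)
  have iAq : ∀ (Qq : 𝓦 → ℝ), Measurable Qq → Integrable (fun ω => Qq (W ω)) μ →
      Integrable (fun ω => A ω * (Qq (W ω) / gn (W ω))) μ := by
    intro Qq hQqm hQqint
    refine (hψint Qq hQqm hQqint).abs.mono'
      (hA.mul ((hQqm.comp hW).div (hgnm.comp hW))).aestronglyMeasurable
      (Filter.Eventually.of_forall fun ω => ?_)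
    rw [Real.norm_eq_abs, abs_mul]
    exact mul_le_of_le_one_left (abs_nonneg _) (hA1 ω)
  have i1 : Integrable (fun ω => (gn (W ω))⁻¹ * (A ω * Y ω ^ 2)) μ :=
    iAZ _ (C ^ 2) (hY.pow_const 2)
      (fun ω => by rw [abs_pow]; exact pow_le_pow_left₀ (abs_nonneg _) (hYb ω) 2)
  have i2 : Integrable (fun ω => -(2 * μn) * ((gn (W ω))⁻¹ * (A ω * Y ω))) μ :=
    (iAZ Y C hY hYb).const_mul _
  have i3 : Integrable (fun ω => 2 * μn * (A ω * (Qn1 (W ω) / gn (W ω)))) μ :=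
    (iAq Qn1 hQn1m hQn1int).const_mul _
  have i4 : Integrable (fun ω => -(A ω * (Qn2 (W ω) / gn (W ω)))) μ :=
    (iAq Qn2 hQn2m hQn2int).neg
  have i5 : Integrable (fun ω => Qn2 (W ω) - 2 * μn * Qn1 (W ω) + (μn ^ 2 - σ2)) μ :=
    (hQn2int.sub (hQn1int.const_mul (2 * μn))).add (integrable_const _)
  have i12 : Integrable (fun ω => (gn (W ω))⁻¹ * (A ω * Y ω ^ 2)
      + -(2 * μn) * ((gn (W ω))⁻¹ * (A ω * Y ω))) μ := i1.add i2
  have i123 : Integrable (fun ω => (gn (W ω))⁻¹ * (A ω * Y ω ^ 2)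
      + -(2 * μn) * ((gn (W ω))⁻¹ * (A ω * Y ω))
      + 2 * μn * (A ω * (Qn1 (W ω) / gn (W ω)))) μ := i12.add i3
  have i1234 : Integrable (fun ω => (gn (W ω))⁻¹ * (A ω * Y ω ^ 2)
      + -(2 * μn) * ((gn (W ω))⁻¹ * (A ω * Y ω))
      + 2 * μn * (A ω * (Qn1 (W ω) / gn (W ω)))
      + -(A ω * (Qn2 (W ω) / gn (W ω)))) μ := i123.add i4
  have i5a : Integrable (fun ω => Qn2 (W ω) - 2 * μn * Qn1 (W ω)) μ :=
    hQn2int.sub (hQn1int.const_mul (2 * μn))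
  -- LHS computation
  have hL : ∫ ω, ((A ω / gn (W ω))
        * ((Y ω) ^ 2 - 2 * Y ω * μn + 2 * Qn1 (W ω) * μn - Qn2 (W ω))
      + Qn2 (W ω) - 2 * Qn1 (W ω) * μn + μn ^ 2 - σ2) ∂μ
      = ∫ ω, (gn (W ω))⁻¹ * (g (W ω) * Q2 (W ω)) ∂μ
        + -(2 * μn) * ∫ ω, (gn (W ω))⁻¹ * (g (W ω) * Q1 (W ω)) ∂μ
        + 2 * μn * ∫ ω, (gn (W ω))⁻¹ * (g (W ω) * Qn1 (W ω)) ∂μ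
        + -(∫ ω, (gn (W ω))⁻¹ * (g (W ω) * Qn2 (W ω)) ∂μ)
        + (∫ ω, Qn2 (W ω) ∂μ - 2 * μn * ∫ ω, Qn1 (W ω) ∂μ + (μn ^ 2 - σ2)) := by
    calc ∫ ω, ((A ω / gn (W ω))
          * ((Y ω) ^ 2 - 2 * Y ω * μn + 2 * Qn1 (W ω) * μn - Qn2 (W ω))
        + Qn2 (W ω) - 2 * Qn1 (W ω) * μn + μn ^ 2 - σ2) ∂μ
        = ∫ ω, ((gn (W ω))⁻¹ * (A ω * Y ω ^ 2)
            + -(2 * μn) * ((gn (W ω))⁻¹ * (A ω * Y ω))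
            + 2 * μn * (A ω * (Qn1 (W ω) / gn (W ω)))
            + -(A ω * (Qn2 (W ω) / gn (W ω)))
            + (Qn2 (W ω) - 2 * μn * Qn1 (W ω) + (μn ^ 2 - σ2))) ∂μ :=
          integral_congr_ae (Filter.Eventually.of_forall fun ω => by ring)
      _ = _ := by
          rw [integral_add i1234 i5, integral_add i123 i4, integral_add i12 i3,
            integral_add i1 i2, integral_const_mul, integral_const_mul, integral_neg,
            integral_add i5a (integrable_const _),
            integral_sub hQn2int (hQn1int.const_mul (2 * μn)), integral_const_mul,
            integral_const, K2, K1, HQ1, HQ2, cb1, cb2]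
          simp [measure_univ]
  -- RHS computation
  have is5 : Integrable
      (fun ω => Qn2 (W ω) - Q2 (W ω) + 2 * μn * (Q1 (W ω) - Qn1 (W ω))) μ :=
    (hQn2int.sub hQ2int).add ((hQ1int.sub hQn1int).const_mul _)
  have hR : ∫ ω, ((g (W ω) - gn (W ω)) / gn (W ω) * (Q2 (W ω) - Qn2 (W ω))
          + 2 * μn * ((g (W ω) - gn (W ω)) / gn (W ω)) * (Qn1 (W ω) - Q1 (W ω))) ∂μ
      = ∫ ω, (gn (W ω))⁻¹ * (g (W ω) * Q2 (W ω)) ∂μ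
        + -(∫ ω, (gn (W ω))⁻¹ * (g (W ω) * Qn2 (W ω)) ∂μ)
        + 2 * μn * ∫ ω, (gn (W ω))⁻¹ * (g (W ω) * Qn1 (W ω)) ∂μ
        + -(2 * μn * ∫ ω, (gn (W ω))⁻¹ * (g (W ω) * Q1 (W ω)) ∂μ)
        + (∫ ω, Qn2 (W ω) ∂μ - ∫ ω, Q2 (W ω) ∂μ
            + 2 * μn * (∫ ω, Q1 (W ω) ∂μ - ∫ ω, Qn1 (W ω) ∂μ)) := by
    have j1 := ibase Q2 hQ2m hQ2int
    have j2 : Integrable (fun ω => -((gn (W ω))⁻¹ * (g (W ω) * Qn2 (W ω)))) μ :=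
      (ibase Qn2 hQn2m hQn2int).neg
    have j3 : Integrable (fun ω => 2 * μn * ((gn (W ω))⁻¹ * (g (W ω) * Qn1 (W ω)))) μ :=
      (ibase Qn1 hQn1m hQn1int).const_mul _
    have j4 : Integrable (fun ω => -(2 * μn * ((gn (W ω))⁻¹ * (g (W ω) * Q1 (W ω))))) μ :=
      ((ibase Q1 hQ1m hQ1int).const_mul _).neg
    have j12 : Integrable (fun ω => (gn (W ω))⁻¹ * (g (W ω) * Q2 (W ω))
        + -((gn (W ω))⁻¹ * (g (W ω) * Qn2 (W ω)))) μ := j1.add j2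
    have j123 : Integrable (fun ω => (gn (W ω))⁻¹ * (g (W ω) * Q2 (W ω))
        + -((gn (W ω))⁻¹ * (g (W ω) * Qn2 (W ω)))
        + 2 * μn * ((gn (W ω))⁻¹ * (g (W ω) * Qn1 (W ω)))) μ := j12.add j3
    have j1234 : Integrable (fun ω => (gn (W ω))⁻¹ * (g (W ω) * Q2 (W ω))
        + -((gn (W ω))⁻¹ * (g (W ω) * Qn2 (W ω)))
        + 2 * μn * ((gn (W ω))⁻¹ * (g (W ω) * Qn1 (W ω)))
        + -(2 * μn * ((gn (W ω))⁻¹ * (g (W ω) * Q1 (W ω))))) μ := j123.add j4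
    have is5a : Integrable (fun ω => Qn2 (W ω) - Q2 (W ω)) μ := hQn2int.sub hQ2int
    have is5b : Integrable (fun ω => 2 * μn * (Q1 (W ω) - Qn1 (W ω))) μ :=
      (hQ1int.sub hQn1int).const_mul (2 * μn)
    calc ∫ ω, ((g (W ω) - gn (W ω)) / gn (W ω) * (Q2 (W ω) - Qn2 (W ω))
          + 2 * μn * ((g (W ω) - gn (W ω)) / gn (W ω)) * (Qn1 (W ω) - Q1 (W ω))) ∂μ
        = ∫ ω, ((gn (W ω))⁻¹ * (g (W ω) * Q2 (W ω))
            + -((gn (W ω))⁻¹ * (g (W ω) * Qn2 (W ω)))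
            + 2 * μn * ((gn (W ω))⁻¹ * (g (W ω) * Qn1 (W ω)))
            + -(2 * μn * ((gn (W ω))⁻¹ * (g (W ω) * Q1 (W ω))))
            + (Qn2 (W ω) - Q2 (W ω) + 2 * μn * (Q1 (W ω) - Qn1 (W ω)))) ∂μ := by
          refine integral_congr_ae ?_
          filter_upwards [hgn] with ω h
          have h0 : gn (W ω) ≠ 0 := (lt_of_lt_of_le hc h).ne'
          field_simp
          ring
      _ = _ := by
          rw [integral_add j1234 is5, integral_add j123 j4, integral_add j12 j3,
            integral_add j1 j2, integral_neg, integral_const_mul, integral_neg,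
            integral_const_mul,
            integral_add is5a is5b,
            integral_sub hQn2int hQ2int, integral_const_mul,
            integral_sub hQ1int hQn1int]
  rw [hL, hR, hσ2, hμ1]
  ring
end

section
/- Double robustness (outcome-consistent case): in the bias decomposition of the one-step variance estimator, if Q̄ₙ(·,1) = Q̄(·,1) and Q̄ₙ²(·,1) = Q̄²(·,1) almost surely and μₙ = μ(1), then the bias is exactly zero regardless of the choice of gₙ (provided gₙ(W) > 0 a.s.). -/
open MeasureTheory

theorem stmt_10_general {Ω 𝓦 : Type*} [MeasurableSpace Ω] [MeasurableSpace 𝓦]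
    (μ : Measure Ω)
    (W : Ω → 𝓦) (g gn Q1 Q2 Qn1 Qn2 : 𝓦 → ℝ) (μn : ℝ)
    (hQ1 : ∀ᵐ ω ∂μ, Qn1 (W ω) = Q1 (W ω))
    (hQ2 : ∀ᵐ ω ∂μ, Qn2 (W ω) = Q2 (W ω))
    (hμn : μn = ∫ ω, Q1 (W ω) ∂μ) :
    (∫ ω, ((g (W ω) - gn (W ω)) / gn (W ω) * (Q2 (W ω) - Qn2 (W ω))
        + 2 * μn * ((g (W ω) - gn (W ω)) / gn (W ω)) * (Qn1 (W ω) - Q1 (W ω))) ∂μ)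
      + (μn - ∫ ω, Q1 (W ω) ∂μ) ^ 2 = 0 := by
  rw [integral_eq_zero_of_ae, hμn, sub_self]
  · ring
  · filter_upwards [hQ1, hQ2] with ω hQ1ω hQ2ω
    rw [hQ1ω, hQ2ω, Pi.zero_apply]
    ring

/-- Double robustness (outcome-consistent case): in the bias decomposition of the one-step
variance estimator, if `Q̄ₙ(·,1) = Q̄(·,1)` and `Q̄ₙ²(·,1) = Q̄²(·,1)` almost surely and
`μₙ = μ(1)`, then the bias is exactly zero regardless of the choice of `gₙ` (provided
`gₙ(W) > 0` a.s.). -/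
theorem stmt_10 {Ω 𝓦 : Type*} [MeasurableSpace Ω] [MeasurableSpace 𝓦]
    (μ : Measure Ω) [IsProbabilityMeasure μ]
    (W : Ω → 𝓦) (g gn Q1 Q2 Qn1 Qn2 : 𝓦 → ℝ) (μn : ℝ)
    (hgn : ∀ᵐ ω ∂μ, 0 < gn (W ω))
    (hQ1 : ∀ᵐ ω ∂μ, Qn1 (W ω) = Q1 (W ω))
    (hQ2 : ∀ᵐ ω ∂μ, Qn2 (W ω) = Q2 (W ω))
    (hμn : μn = ∫ ω, Q1 (W ω) ∂μ) :
    (∫ ω, ((g (W ω) - gn (W ω)) / gn (W ω) * (Q2 (W ω) - Qn2 (W ω))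
        + 2 * μn * ((g (W ω) - gn (W ω)) / gn (W ω)) * (Qn1 (W ω) - Q1 (W ω))) ∂μ)
      + (μn - ∫ ω, Q1 (W ω) ∂μ) ^ 2 = 0 :=
  stmt_10_general μ W g gn Q1 Q2 Qn1 Qn2 μn hQ1 hQ2 hμn
end

section
/- Second-order remainder bound: under the bias decomposition, if c ≤ gₙ(W) a.s. for some c > 0, then |Bias| ≤ (1/c)·‖g − gₙ‖₂·‖Q̄² − Q̄ₙ²‖₂ + (2|μₙ|/c)·‖g − gₙ‖₂·‖Q̄ − Q̄ₙ‖₂ + (μₙ − μ(1))², where ‖f‖₂ = (E[f(W)²])^{1/2}. -/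
open MeasureTheory ProbabilityTheory


lemma cs_int {α : Type*} [MeasurableSpace α] {μ : Measure α} {f h : α → ℝ}
    (hf : MemLp f 2 μ) (hh : MemLp h 2 μ) :
    ∫ x, |f x| * |h x| ∂μ ≤ Real.sqrt (∫ x, f x ^ 2 ∂μ) * Real.sqrt (∫ x, h x ^ 2 ∂μ) := by
  set F : Lp ℝ 2 μ := (hf.abs).toLp |f| with hFdef
  set H : Lp ℝ 2 μ := (hh.abs).toLp |h| with hHdef
  have hFf : F =ᵐ[μ] fun x => |f x| := hf.abs.coeFn_toLp
  have hHh : H =ᵐ[μ] fun x => |h x| := hh.abs.coeFn_toLp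
  have hinner : ∀ (u v : Lp ℝ 2 μ), inner ℝ u v = ∫ x, u x * v x ∂μ := by
    intro u v
    rw [L2.inner_def]
    simp [RCLike.inner_apply, conj_trivial, mul_comm]
  have key : (inner ℝ F H : ℝ) ≤ ‖F‖ * ‖H‖ := real_inner_le_norm F H
  have hFnorm : ‖F‖ = Real.sqrt (∫ x, f x ^ 2 ∂μ) := by
    rw [← Real.sqrt_sq (norm_nonneg F), ← real_inner_self_eq_norm_sq, hinner]
    congr 1
    refine integral_congr_ae ?_
    filter_upwards [hFf] with x hx
    rw [hx]; simp [sq_abs, sq]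
  have hHnorm : ‖H‖ = Real.sqrt (∫ x, h x ^ 2 ∂μ) := by
    rw [← Real.sqrt_sq (norm_nonneg H), ← real_inner_self_eq_norm_sq, hinner]
    congr 1
    refine integral_congr_ae ?_
    filter_upwards [hHh] with x hx
    rw [hx]; simp [sq_abs, sq]
  have hint : (inner ℝ F H : ℝ) = ∫ x, |f x| * |h x| ∂μ := by
    rw [hinner]
    refine integral_congr_ae ?_
    filter_upwards [hFf, hHh] with x h1 h2
    rw [h1, h2]
  rw [← hint, ← hFnorm, ← hHnorm]
  exact key

lemma abs_mul_integrable {α : Type*} [MeasurableSpace α] {μ : Measure α} {f h : α → ℝ}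
    (hf : MemLp f 2 μ) (hh : MemLp h 2 μ) :
    Integrable (fun x => |f x| * |h x|) μ := by
  refine Integrable.mono' ((hf.integrable_sq.add hh.integrable_sq).div_const 2)
    ((hf.aestronglyMeasurable.norm.mul hh.aestronglyMeasurable.norm).congr ?_) ?_
  · filter_upwards with x; simp [Real.norm_eq_abs]
  · filter_upwards with x
    rw [Real.norm_eq_abs, abs_mul, abs_abs, abs_abs]
    simp only [Pi.add_apply]
    nlinarith [sq_nonneg (|f x| - |h x|), sq_abs (f x), sq_abs (h x)]

/-- Second-order remainder bound: under the bias decomposition, if `c ≤ gₙ(W)` a.s. for some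
`c > 0` (and the nuisance differences are square integrable), then
`|Bias| ≤ (1/c)·‖g − gₙ‖₂·‖Q̄² − Q̄ₙ²‖₂ + (2|μₙ|/c)·‖g − gₙ‖₂·‖Q̄ − Q̄ₙ‖₂ + (μₙ − μ(1))²`,
where `‖f‖₂ = (E[f(W)²])^{1/2}`. -/
theorem stmt_11 {Ω 𝓦 : Type*} [MeasurableSpace Ω] [MeasurableSpace 𝓦]
    (μ : Measure Ω) [IsProbabilityMeasure μ]
    (W : Ω → 𝓦) (hW : Measurable W)
    (g gn Q1 Q2 Qn1 Qn2 : 𝓦 → ℝ)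
    (hg : Measurable g) (hgn : Measurable gn) (hQ1 : Measurable Q1) (hQ2 : Measurable Q2)
    (hQn1 : Measurable Qn1) (hQn2 : Measurable Qn2)
    (c : ℝ) (hc : 0 < c) (hgnc : ∀ᵐ ω ∂μ, c ≤ gn (W ω))
    (hL2g : MemLp (fun ω => g (W ω) - gn (W ω)) 2 μ)
    (hL2Q1 : MemLp (fun ω => Q1 (W ω) - Qn1 (W ω)) 2 μ)
    (hL2Q2 : MemLp (fun ω => Q2 (W ω) - Qn2 (W ω)) 2 μ)
    (μn : ℝ) (μ1 : ℝ) (hμ1 : μ1 = ∫ ω, Q1 (W ω) ∂μ) :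
    |(∫ ω, ((g (W ω) - gn (W ω)) / gn (W ω) * (Q2 (W ω) - Qn2 (W ω))
        + 2 * μn * ((g (W ω) - gn (W ω)) / gn (W ω)) * (Qn1 (W ω) - Q1 (W ω))) ∂μ)
      + (μn - μ1) ^ 2|
      ≤ (1 / c) * Real.sqrt (∫ ω, (g (W ω) - gn (W ω)) ^ 2 ∂μ)
            * Real.sqrt (∫ ω, (Q2 (W ω) - Qn2 (W ω)) ^ 2 ∂μ)
        + (2 * |μn| / c) * Real.sqrt (∫ ω, (g (W ω) - gn (W ω)) ^ 2 ∂μ)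
            * Real.sqrt (∫ ω, (Q1 (W ω) - Qn1 (W ω)) ^ 2 ∂μ)
        + (μn - μ1) ^ 2 := by
  have hI12 := abs_mul_integrable hL2g hL2Q2
  have hI13 := abs_mul_integrable hL2g hL2Q1
  set A : Ω → ℝ := fun ω => (g (W ω) - gn (W ω)) / gn (W ω) * (Q2 (W ω) - Qn2 (W ω)) with hA
  set B : Ω → ℝ := fun ω =>
    2 * μn * ((g (W ω) - gn (W ω)) / gn (W ω)) * (Qn1 (W ω) - Q1 (W ω)) with hB
  have hmA : Measurable A := (((hg.sub hgn).div hgn).mul (hQ2.sub hQn2)).comp hW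
  have hmB : Measurable B :=
    ((measurable_const.mul ((hg.sub hgn).div hgn)).mul (hQn1.sub hQ1)).comp hW
  have hAle : ∀ᵐ ω ∂μ, ‖A ω‖ ≤
      (1 / c) * (|g (W ω) - gn (W ω)| * |Q2 (W ω) - Qn2 (W ω)|) := by
    filter_upwards [hgnc] with ω hω
    have hpos : (0 : ℝ) < gn (W ω) := hc.trans_le hω
    rw [Real.norm_eq_abs, hA, abs_mul, abs_div, abs_of_pos hpos]
    have h1 : |g (W ω) - gn (W ω)| / gn (W ω) ≤ |g (W ω) - gn (W ω)| / c := by gcongr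
    calc |g (W ω) - gn (W ω)| / gn (W ω) * |Q2 (W ω) - Qn2 (W ω)|
        ≤ |g (W ω) - gn (W ω)| / c * |Q2 (W ω) - Qn2 (W ω)| :=
          mul_le_mul_of_nonneg_right h1 (abs_nonneg _)
      _ = (1 / c) * (|g (W ω) - gn (W ω)| * |Q2 (W ω) - Qn2 (W ω)|) := by ring
  have hBle : ∀ᵐ ω ∂μ, ‖B ω‖ ≤
      (2 * |μn| / c) * (|g (W ω) - gn (W ω)| * |Q1 (W ω) - Qn1 (W ω)|) := by
    filter_upwards [hgnc] with ω hω
    have hpos : (0 : ℝ) < gn (W ω) := hc.trans_le hω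
    have habs : |Qn1 (W ω) - Q1 (W ω)| = |Q1 (W ω) - Qn1 (W ω)| := abs_sub_comm _ _
    rw [Real.norm_eq_abs, hB, abs_mul, abs_mul, abs_div, abs_of_pos hpos, habs]
    have h1 : |g (W ω) - gn (W ω)| / gn (W ω) ≤ |g (W ω) - gn (W ω)| / c := by gcongr
    have h2 : |2 * μn| = 2 * |μn| := by rw [abs_mul]; norm_num
    rw [h2]
    calc 2 * |μn| * (|g (W ω) - gn (W ω)| / gn (W ω)) * |Q1 (W ω) - Qn1 (W ω)|
        ≤ 2 * |μn| * (|g (W ω) - gn (W ω)| / c) * |Q1 (W ω) - Qn1 (W ω)| := by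
          have : (0:ℝ) ≤ 2 * |μn| := by positivity
          exact mul_le_mul_of_nonneg_right (mul_le_mul_of_nonneg_left h1 this) (abs_nonneg _)
      _ = (2 * |μn| / c) * (|g (W ω) - gn (W ω)| * |Q1 (W ω) - Qn1 (W ω)|) := by ring
  have hAint : Integrable A μ :=
    Integrable.mono' (hI12.const_mul (1 / c)) hmA.aestronglyMeasurable hAle
  have hBint : Integrable B μ :=
    Integrable.mono' (hI13.const_mul (2 * |μn| / c)) hmB.aestronglyMeasurable hBle
  have hIA : |∫ ω, A ω ∂μ| ≤ (1 / c) *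
      (Real.sqrt (∫ ω, (g (W ω) - gn (W ω)) ^ 2 ∂μ)
        * Real.sqrt (∫ ω, (Q2 (W ω) - Qn2 (W ω)) ^ 2 ∂μ)) := by
    calc |∫ ω, A ω ∂μ| ≤ ∫ ω, |A ω| ∂μ := by
          simpa [Real.norm_eq_abs] using norm_integral_le_integral_norm A
      _ ≤ ∫ ω, (1 / c) * (|g (W ω) - gn (W ω)| * |Q2 (W ω) - Qn2 (W ω)|) ∂μ :=
          integral_mono_ae hAint.abs (hI12.const_mul _)
            (by filter_upwards [hAle] with ω h using by simpa using h)
      _ = (1 / c) * ∫ ω, |g (W ω) - gn (W ω)| * |Q2 (W ω) - Qn2 (W ω)| ∂μ :=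
          integral_const_mul _ _
      _ ≤ _ := mul_le_mul_of_nonneg_left (cs_int hL2g hL2Q2) (by positivity)
  have hIB : |∫ ω, B ω ∂μ| ≤ (2 * |μn| / c) *
      (Real.sqrt (∫ ω, (g (W ω) - gn (W ω)) ^ 2 ∂μ)
        * Real.sqrt (∫ ω, (Q1 (W ω) - Qn1 (W ω)) ^ 2 ∂μ)) := by
    calc |∫ ω, B ω ∂μ| ≤ ∫ ω, |B ω| ∂μ := by
          simpa [Real.norm_eq_abs] using norm_integral_le_integral_norm B
      _ ≤ ∫ ω, (2 * |μn| / c) * (|g (W ω) - gn (W ω)| * |Q1 (W ω) - Qn1 (W ω)|) ∂μ :=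
          integral_mono_ae hBint.abs (hI13.const_mul _)
            (by filter_upwards [hBle] with ω h using by simpa using h)
      _ = (2 * |μn| / c) * ∫ ω, |g (W ω) - gn (W ω)| * |Q1 (W ω) - Qn1 (W ω)| ∂μ :=
          integral_const_mul _ _
      _ ≤ _ := mul_le_mul_of_nonneg_left (cs_int hL2g hL2Q1) (by positivity)
  have hsplit : (∫ ω, (A ω + B ω) ∂μ) = (∫ ω, A ω ∂μ) + ∫ ω, B ω ∂μ :=
    integral_add hAint hBint
  have habs : |(∫ ω, (A ω + B ω) ∂μ) + (μn - μ1) ^ 2|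
      ≤ |∫ ω, A ω ∂μ| + |∫ ω, B ω ∂μ| + (μn - μ1) ^ 2 := by
    rw [hsplit]
    calc |(∫ ω, A ω ∂μ) + (∫ ω, B ω ∂μ) + (μn - μ1) ^ 2|
        ≤ |(∫ ω, A ω ∂μ) + (∫ ω, B ω ∂μ)| + |(μn - μ1) ^ 2| := abs_add_le _ _
      _ ≤ |∫ ω, A ω ∂μ| + |∫ ω, B ω ∂μ| + (μn - μ1) ^ 2 := by
          rw [abs_of_nonneg (sq_nonneg (μn - μ1))]
          exact add_le_add_left (abs_add_le _ _) _
  calc |(∫ ω, (A ω + B ω) ∂μ) + (μn - μ1) ^ 2|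
      ≤ |∫ ω, A ω ∂μ| + |∫ ω, B ω ∂μ| + (μn - μ1) ^ 2 := habs
    _ ≤ _ := by
        rw [mul_assoc (1 / c), mul_assoc (2 * |μn| / c)]
        exact add_le_add_left (add_le_add hIA hIB) _
end

section
/- If nuisance sequences satisfy ‖g − gₙ‖₂·‖Q̄ − Q̄ₙ‖₂ = o(n^{-1/2}), ‖g − gₙ‖₂·‖Q̄² − Q̄ₙ²‖₂ = o(n^{-1/2}), |μₙ − μ(1)| = o(n^{-1/4}), and gₙ ≥ c > 0 uniformly with μₙ uniformly bounded, then √n times the second-order remainder R(P₀, P̂ₙ) = σ²(P̂ₙ;1) − σ²(P₀;1) + E_{P₀}[D^{σ²(1)}(P̂ₙ;O)] converges to 0. -/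
open MeasureTheory ProbabilityTheory Filter Asymptotics

private lemma my_div_le_div {a b c : ℝ} (ha : 0 ≤ a) (hc : 0 < c) (h : c ≤ b) :
    a / b ≤ a / c := by
  rw [div_le_div_iff₀ (lt_of_lt_of_le hc h) hc]
  exact mul_le_mul_of_nonneg_left h ha

private lemma my_int_mul {α : Type*} [MeasurableSpace α] {ν : Measure α} {f h : α → ℝ}
    (hf : MemLp f 2 ν) (hh : MemLp h 2 ν) :
    Integrable (fun x => f x * h x) ν := by
  refine Integrable.mono' (((hf.integrable_sq.add hh.integrable_sq).div_const 2))
    (hf.1.mul hh.1) (Filter.Eventually.of_forall fun x => ?_)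
  rw [Real.norm_eq_abs, abs_mul]
  simp only [Pi.add_apply]
  nlinarith [sq_nonneg (|f x| - |h x|), sq_abs (f x), sq_abs (h x), abs_nonneg (f x),
    abs_nonneg (h x)]

private lemma my_cs {α : Type*} [MeasurableSpace α] {ν : Measure α} {f h : α → ℝ}
    (hf : MemLp f 2 ν) (hh : MemLp h 2 ν) :
    ∫ x, |f x * h x| ∂ν ≤
      Real.sqrt (∫ x, f x ^ 2 ∂ν) * Real.sqrt (∫ x, h x ^ 2 ∂ν) := by
  set A := Real.sqrt (∫ x, f x ^ 2 ∂ν) with hA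
  set B := Real.sqrt (∫ x, h x ^ 2 ∂ν) with hB
  have hIf := hf.integrable_sq
  have hIh := hh.integrable_sq
  have hfnn : (0:ℝ) ≤ ∫ x, f x ^ 2 ∂ν := integral_nonneg fun x => sq_nonneg _
  have hhnn : (0:ℝ) ≤ ∫ x, h x ^ 2 ∂ν := integral_nonneg fun x => sq_nonneg _
  have hA2 : A ^ 2 = ∫ x, f x ^ 2 ∂ν := Real.sq_sqrt hfnn
  have hB2 : B ^ 2 = ∫ x, h x ^ 2 ∂ν := Real.sq_sqrt hhnn
  by_cases hAz : A = 0
  · have hzero : ∫ x, f x ^ 2 ∂ν = 0 := by rw [← hA2, hAz]; ring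
    have hae : (fun x => f x ^ 2) =ᵐ[ν] 0 :=
      (integral_eq_zero_iff_of_nonneg (fun x => sq_nonneg _) hIf).mp hzero
    have hae2 : (fun x => |f x * h x|) =ᵐ[ν] 0 := by
      filter_upwards [hae] with x hx
      have : f x = 0 := by
        have := hx
        simp only [Pi.zero_apply] at this
        exact pow_eq_zero_iff (two_ne_zero) |>.mp this
      simp [this]
    rw [integral_congr_ae hae2]
    simp
    positivity
  · by_cases hBz : B = 0
    · have hzero : ∫ x, h x ^ 2 ∂ν = 0 := by rw [← hB2, hBz]; ring
      have hae : (fun x => h x ^ 2) =ᵐ[ν] 0 :=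
        (integral_eq_zero_iff_of_nonneg (fun x => sq_nonneg _) hIh).mp hzero
      have hae2 : (fun x => |f x * h x|) =ᵐ[ν] 0 := by
        filter_upwards [hae] with x hx
        have : h x = 0 := by
          have := hx
          simp only [Pi.zero_apply] at this
          exact pow_eq_zero_iff (two_ne_zero) |>.mp this
        simp [this]
      rw [integral_congr_ae hae2]
      simp
      positivity
    · have hApos : 0 < A := lt_of_le_of_ne (Real.sqrt_nonneg _) (Ne.symm hAz)
      have hBpos : 0 < B := lt_of_le_of_ne (Real.sqrt_nonneg _) (Ne.symm hBz)
      set t : ℝ := B / A with ht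
      have htpos : 0 < t := div_pos hBpos hApos
      have hptwise : ∀ x, |f x * h x| ≤ (t * f x ^ 2 + h x ^ 2 / t) / 2 := by
        intro x
        have key : 2 * t * |f x * h x| ≤ t ^ 2 * f x ^ 2 + h x ^ 2 := by
          rw [abs_mul]
          nlinarith [sq_nonneg (t * |f x| - |h x|), sq_abs (f x), sq_abs (h x),
            abs_nonneg (f x), abs_nonneg (h x)]
        have h2t : 0 < 2 * t := by linarith
        calc |f x * h x| = (2 * t * |f x * h x|) / (2 * t) := by field_simp
          _ ≤ (t ^ 2 * f x ^ 2 + h x ^ 2) / (2 * t) := by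
              exact div_le_div_of_nonneg_right key h2t.le
          _ = (t * f x ^ 2 + h x ^ 2 / t) / 2 := by field_simp
      have hRHSint : Integrable (fun x => (t * f x ^ 2 + h x ^ 2 / t) / 2) ν :=
        ((hIf.const_mul t).add (hIh.div_const t)).div_const 2
      calc ∫ x, |f x * h x| ∂ν ≤ ∫ x, (t * f x ^ 2 + h x ^ 2 / t) / 2 ∂ν := by
            refine integral_mono_of_nonneg (Filter.Eventually.of_forall fun x => abs_nonneg _)
              hRHSint (Filter.Eventually.of_forall hptwise)
        _ = (t * (∫ x, f x ^ 2 ∂ν) + (∫ x, h x ^ 2 ∂ν) / t) / 2 := by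
            rw [integral_div, integral_add (hIf.const_mul t) (hIh.div_const t),
              integral_const_mul, integral_div]
        _ = A * B := by
            rw [← hA2, ← hB2, ht]; field_simp; ring


/-- If nuisance sequences satisfy `‖g − gₙ‖₂·‖Q̄ − Q̄ₙ‖₂ = o(n^{-1/2})`,
`‖g − gₙ‖₂·‖Q̄² − Q̄ₙ²‖₂ = o(n^{-1/2})`, `|μₙ − μ(1)| = o(n^{-1/4})`, with `gₙ ≥ c > 0`
uniformly and `μₙ` uniformly bounded, then `√n` times the second-order remainder
`R(P₀, P̂ₙ)` (given by the exact bias decomposition) converges to `0`. -/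
theorem stmt_12 {Ω 𝓦 : Type*} [MeasurableSpace Ω] [MeasurableSpace 𝓦]
    (μ : Measure Ω) [IsProbabilityMeasure μ]
    (W : Ω → 𝓦) (hW : Measurable W)
    (g Q1 Q2 : 𝓦 → ℝ) (hg : Measurable g) (hQ1 : Measurable Q1) (hQ2 : Measurable Q2)
    (gn Qn1 Qn2 : ℕ → 𝓦 → ℝ) (μn : ℕ → ℝ)
    (hgnm : ∀ n, Measurable (gn n)) (hQn1m : ∀ n, Measurable (Qn1 n))
    (hQn2m : ∀ n, Measurable (Qn2 n))
    (c : ℝ) (hc : 0 < c) (hgnc : ∀ n, ∀ᵐ ω ∂μ, c ≤ gn n (W ω))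
    (M : ℝ) (hM : ∀ n, |μn n| ≤ M)
    (hL2g : ∀ n, MemLp (fun ω => g (W ω) - gn n (W ω)) 2 μ)
    (hL2Q1 : ∀ n, MemLp (fun ω => Q1 (W ω) - Qn1 n (W ω)) 2 μ)
    (hL2Q2 : ∀ n, MemLp (fun ω => Q2 (W ω) - Qn2 n (W ω)) 2 μ)
    (μ1 : ℝ) (hμ1 : μ1 = ∫ ω, Q1 (W ω) ∂μ)
    -- rate conditions
    (hrate1 : (fun n : ℕ => Real.sqrt (∫ ω, (g (W ω) - gn n (W ω)) ^ 2 ∂μ)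
        * Real.sqrt (∫ ω, (Q1 (W ω) - Qn1 n (W ω)) ^ 2 ∂μ))
      =o[atTop] fun n : ℕ => (n : ℝ) ^ (-(1 : ℝ) / 2))
    (hrate2 : (fun n : ℕ => Real.sqrt (∫ ω, (g (W ω) - gn n (W ω)) ^ 2 ∂μ)
        * Real.sqrt (∫ ω, (Q2 (W ω) - Qn2 n (W ω)) ^ 2 ∂μ))
      =o[atTop] fun n : ℕ => (n : ℝ) ^ (-(1 : ℝ) / 2))
    (hrate3 : (fun n : ℕ => |μn n - μ1|) =o[atTop] fun n : ℕ => (n : ℝ) ^ (-(1 : ℝ) / 4))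
    -- the second-order remainder, given by the exact bias decomposition
    (R : ℕ → ℝ)
    (hR : ∀ n, R n = (∫ ω, ((g (W ω) - gn n (W ω)) / gn n (W ω)
          * (Q2 (W ω) - Qn2 n (W ω))
        + 2 * μn n * ((g (W ω) - gn n (W ω)) / gn n (W ω))
          * (Qn1 n (W ω) - Q1 (W ω))) ∂μ)
      + (μn n - μ1) ^ 2) :
    Tendsto (fun n : ℕ => Real.sqrt n * R n) atTop (nhds 0) := by
  have h0M : 0 ≤ M := le_trans (abs_nonneg _) (hM 0)
  -- notation
  set a : ℕ → ℝ := fun n => Real.sqrt (∫ ω, (g (W ω) - gn n (W ω)) ^ 2 ∂μ) with ha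
  set b : ℕ → ℝ := fun n => Real.sqrt (∫ ω, (Q1 (W ω) - Qn1 n (W ω)) ^ 2 ∂μ) with hb
  set d : ℕ → ℝ := fun n => Real.sqrt (∫ ω, (Q2 (W ω) - Qn2 n (W ω)) ^ 2 ∂μ) with hd
  set S : ℕ → ℝ := fun n => 1 / c * (a n * d n) + 2 * M / c * (a n * b n)
    + |μn n - μ1| ^ 2 with hS
  -- pointwise bound |R n| ≤ S n
  have hbound : ∀ n, |R n| ≤ S n := by
    intro n
    have hInt2 : Integrable (fun ω => |(g (W ω) - gn n (W ω)) * (Q2 (W ω) - Qn2 n (W ω))|) μ :=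
      (my_int_mul (hL2g n) (hL2Q2 n)).abs
    have hInt1 : Integrable (fun ω => |(g (W ω) - gn n (W ω)) * (Q1 (W ω) - Qn1 n (W ω))|) μ :=
      (my_int_mul (hL2g n) (hL2Q1 n)).abs
    have hD : Integrable (fun ω => 1 / c * |(g (W ω) - gn n (W ω)) * (Q2 (W ω) - Qn2 n (W ω))|
        + 2 * M / c * |(g (W ω) - gn n (W ω)) * (Q1 (W ω) - Qn1 n (W ω))|) μ :=
      (hInt2.const_mul _).add (hInt1.const_mul _)
    have hae : ∀ᵐ ω ∂μ, ‖(g (W ω) - gn n (W ω)) / gn n (W ω) * (Q2 (W ω) - Qn2 n (W ω))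
        + 2 * μn n * ((g (W ω) - gn n (W ω)) / gn n (W ω)) * (Qn1 n (W ω) - Q1 (W ω))‖
        ≤ 1 / c * |(g (W ω) - gn n (W ω)) * (Q2 (W ω) - Qn2 n (W ω))|
          + 2 * M / c * |(g (W ω) - gn n (W ω)) * (Q1 (W ω) - Qn1 n (W ω))| := by
      filter_upwards [hgnc n] with ω hω
      have hGpos : 0 < gn n (W ω) := lt_of_lt_of_le hc hω
      rw [Real.norm_eq_abs]
      have key1 : |(g (W ω) - gn n (W ω)) / gn n (W ω) * (Q2 (W ω) - Qn2 n (W ω))|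
          ≤ 1 / c * |(g (W ω) - gn n (W ω)) * (Q2 (W ω) - Qn2 n (W ω))| := by
        rw [show (g (W ω) - gn n (W ω)) / gn n (W ω) * (Q2 (W ω) - Qn2 n (W ω))
          = ((g (W ω) - gn n (W ω)) * (Q2 (W ω) - Qn2 n (W ω))) / gn n (W ω) by ring,
          abs_div, abs_of_pos hGpos, one_div_mul_eq_div]
        exact my_div_le_div (abs_nonneg _) hc hω
      have key2 : |2 * μn n * ((g (W ω) - gn n (W ω)) / gn n (W ω)) * (Qn1 n (W ω) - Q1 (W ω))|
          ≤ 2 * M / c * |(g (W ω) - gn n (W ω)) * (Q1 (W ω) - Qn1 n (W ω))| := by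
        rw [show 2 * μn n * ((g (W ω) - gn n (W ω)) / gn n (W ω)) * (Qn1 n (W ω) - Q1 (W ω))
          = (2 * μn n) * (((g (W ω) - gn n (W ω)) * (Qn1 n (W ω) - Q1 (W ω))) / gn n (W ω))
          by ring, abs_mul, abs_div, abs_of_pos hGpos]
        have e2 : |(g (W ω) - gn n (W ω)) * (Qn1 n (W ω) - Q1 (W ω))|
            = |(g (W ω) - gn n (W ω)) * (Q1 (W ω) - Qn1 n (W ω))| := by
          rw [abs_mul, abs_mul, abs_sub_comm (Qn1 n (W ω)) (Q1 (W ω))]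
        rw [e2, show 2 * M / c * |(g (W ω) - gn n (W ω)) * (Q1 (W ω) - Qn1 n (W ω))|
          = (2 * M) * (|(g (W ω) - gn n (W ω)) * (Q1 (W ω) - Qn1 n (W ω))| / c) by ring]
        have h2M : |2 * μn n| ≤ 2 * M := by
          rw [abs_mul, abs_two]
          exact mul_le_mul_of_nonneg_left (hM n) (by norm_num)
        exact mul_le_mul h2M (my_div_le_div (abs_nonneg _) hc hω)
          (by positivity) (by linarith)
      calc |(g (W ω) - gn n (W ω)) / gn n (W ω) * (Q2 (W ω) - Qn2 n (W ω))
            + 2 * μn n * ((g (W ω) - gn n (W ω)) / gn n (W ω)) * (Qn1 n (W ω) - Q1 (W ω))|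
          ≤ |(g (W ω) - gn n (W ω)) / gn n (W ω) * (Q2 (W ω) - Qn2 n (W ω))|
            + |2 * μn n * ((g (W ω) - gn n (W ω)) / gn n (W ω)) * (Qn1 n (W ω) - Q1 (W ω))| :=
            abs_add_le _ _
        _ ≤ _ := add_le_add key1 key2
    have hIabs : |∫ ω, ((g (W ω) - gn n (W ω)) / gn n (W ω) * (Q2 (W ω) - Qn2 n (W ω))
        + 2 * μn n * ((g (W ω) - gn n (W ω)) / gn n (W ω)) * (Qn1 n (W ω) - Q1 (W ω))) ∂μ|
        ≤ 1 / c * (a n * d n) + 2 * M / c * (a n * b n) := by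
      calc |∫ ω, ((g (W ω) - gn n (W ω)) / gn n (W ω) * (Q2 (W ω) - Qn2 n (W ω))
            + 2 * μn n * ((g (W ω) - gn n (W ω)) / gn n (W ω)) * (Qn1 n (W ω) - Q1 (W ω))) ∂μ|
          ≤ ∫ ω, ‖(g (W ω) - gn n (W ω)) / gn n (W ω) * (Q2 (W ω) - Qn2 n (W ω))
            + 2 * μn n * ((g (W ω) - gn n (W ω)) / gn n (W ω)) * (Qn1 n (W ω) - Q1 (W ω))‖ ∂μ :=
            by simpa [Real.norm_eq_abs] using norm_integral_le_integral_norm (μ := μ) (f := fun ω => (g (W ω) - gn n (W ω)) / gn n (W ω) * (Q2 (W ω) - Qn2 n (W ω))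
            + 2 * μn n * ((g (W ω) - gn n (W ω)) / gn n (W ω)) * (Qn1 n (W ω) - Q1 (W ω)))
        _ ≤ ∫ ω, (1 / c * |(g (W ω) - gn n (W ω)) * (Q2 (W ω) - Qn2 n (W ω))|
            + 2 * M / c * |(g (W ω) - gn n (W ω)) * (Q1 (W ω) - Qn1 n (W ω))|) ∂μ :=
            integral_mono_of_nonneg (Filter.Eventually.of_forall fun ω => norm_nonneg _) hD hae
        _ = 1 / c * ∫ ω, |(g (W ω) - gn n (W ω)) * (Q2 (W ω) - Qn2 n (W ω))| ∂μ
            + 2 * M / c * ∫ ω, |(g (W ω) - gn n (W ω)) * (Q1 (W ω) - Qn1 n (W ω))| ∂μ := by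
            rw [integral_add (hInt2.const_mul _) (hInt1.const_mul _), integral_const_mul,
              integral_const_mul]
        _ ≤ 1 / c * (a n * d n) + 2 * M / c * (a n * b n) := by
            refine add_le_add ?_ ?_
            · exact mul_le_mul_of_nonneg_left (my_cs (hL2g n) (hL2Q2 n)) (by positivity)
            · exact mul_le_mul_of_nonneg_left (my_cs (hL2g n) (hL2Q1 n)) (by positivity)
    rw [hR n, hS]
    calc |(∫ ω, ((g (W ω) - gn n (W ω)) / gn n (W ω) * (Q2 (W ω) - Qn2 n (W ω))
          + 2 * μn n * ((g (W ω) - gn n (W ω)) / gn n (W ω)) * (Qn1 n (W ω) - Q1 (W ω))) ∂μ)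
          + (μn n - μ1) ^ 2|
        ≤ |∫ ω, ((g (W ω) - gn n (W ω)) / gn n (W ω) * (Q2 (W ω) - Qn2 n (W ω))
          + 2 * μn n * ((g (W ω) - gn n (W ω)) / gn n (W ω)) * (Qn1 n (W ω) - Q1 (W ω))) ∂μ|
          + |(μn n - μ1) ^ 2| := abs_add_le _ _
      _ ≤ (1 / c * (a n * d n) + 2 * M / c * (a n * b n)) + |μn n - μ1| ^ 2 := by
          rw [abs_pow]
          exact add_le_add hIabs le_rfl
      _ = _ := by ring
  -- the bound is o(n^{-1/2})
  have h3 : (fun n => |μn n - μ1| ^ 2) =o[atTop] (fun n : ℕ => (n : ℝ) ^ (-(1 : ℝ) / 2)) := by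
    have hmul := hrate3.mul hrate3
    refine hmul.congr' (Filter.Eventually.of_forall fun n => (pow_two _).symm) ?_
    filter_upwards [eventually_gt_atTop 0] with n hn
    have hpos : (0:ℝ) < (n : ℝ) := by exact_mod_cast hn
    rw [← Real.rpow_add hpos]
    norm_num
  have hSo : S =o[atTop] (fun n : ℕ => (n : ℝ) ^ (-(1 : ℝ) / 2)) :=
    ((hrate2.const_mul_left (1 / c)).add (hrate1.const_mul_left (2 * M / c))).add h3
  have hRo : R =o[atTop] (fun n : ℕ => (n : ℝ) ^ (-(1 : ℝ) / 2)) := by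
    refine IsBigO.trans_isLittleO (Asymptotics.isBigO_of_le atTop fun n => ?_) hSo
    rw [Real.norm_eq_abs, Real.norm_eq_abs]
    exact (hbound n).trans (le_abs_self _)
  have hfinal : (fun n : ℕ => Real.sqrt n * R n) =o[atTop] (fun _ : ℕ => (1:ℝ)) := by
    have h := (isBigO_refl (fun n : ℕ => Real.sqrt n) atTop).mul_isLittleO hRo
    refine h.trans_isBigO ?_
    refine (isBigO_refl _ _).congr' ?_ EventuallyEq.rfl
    filter_upwards [eventually_gt_atTop 0] with n hn
    have hpos : (0:ℝ) < (n : ℝ) := by exact_mod_cast hn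
    rw [Real.sqrt_eq_rpow, ← Real.rpow_add hpos]
    norm_num
  exact (isLittleO_one_iff ℝ).mp hfinal
end

section
/- Pathwise derivative of the d-th conditional-moment functional under point-mass contamination: for the functional μᵈ(P) = E_P[E_P[Yᵈ | W, A=a]] and the mixture path P_t = t·δ_{õ} + (1−t)·P with õ = (w̃, ã, ỹ) in the support of P, the derivative d/dt μᵈ(P_t)|_{t=0} equals I(ã=a)·(ỹᵈ − Q̄ᵈ(w̃,a))/(I(a=1)g(w̃) + I(a=0)(1−g(w̃))) + Q̄ᵈ(w̃,a) − μᵈ(P), in the setting of discrete W and Y with finitely many atoms. -/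
open Finset

section PointMass

variable {𝓦 𝕐 : Type*} [Fintype 𝓦] [Fintype 𝕐] [DecidableEq 𝓦] [DecidableEq 𝕐]

/-- The point-mass contaminated pmf `p_t = t·δ_{õ} + (1−t)·p`. -/
noncomputable def contam (p : 𝓦 → Bool → 𝕐 → ℝ) (o : 𝓦 × Bool × 𝕐) (t : ℝ) :
    𝓦 → Bool → 𝕐 → ℝ :=
  fun w b y => t * (if (w, b, y) = o then 1 else 0) + (1 - t) * p w b y

/-- Marginal pmf of `W`. -/
noncomputable def margW (p : 𝓦 → Bool → 𝕐 → ℝ) (w : 𝓦) : ℝ :=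
  ∑ b, ∑ y, p w b y

/-- Joint pmf of `(W, A)`. -/
noncomputable def margWA (p : 𝓦 → Bool → 𝕐 → ℝ) (w : 𝓦) (b : Bool) : ℝ :=
  ∑ y, p w b y

/-- Conditional `d`-th moment `Q̄ᵈ(w, a) = E[Yᵈ | W = w, A = a]`, with `Y`-values `v`. -/
noncomputable def condMoment (v : 𝕐 → ℝ) (d : ℕ) (p : 𝓦 → Bool → 𝕐 → ℝ) (a : Bool)
    (w : 𝓦) : ℝ :=
  (∑ y, (v y) ^ d * p w a y) / margWA p w a

/-- Propensity score `g(w) = P(A = 1 | W = w)`. -/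
noncomputable def propScore (p : 𝓦 → Bool → 𝕐 → ℝ) (w : 𝓦) : ℝ :=
  margWA p w true / margW p w

/-- The `d`-th conditional-moment functional `μᵈ(P) = ∑_w yᵈ P(y | a, w) P(w)
  = E_P[E_P[Yᵈ | W, A = a]]`. -/
noncomputable def momFunctional (v : 𝕐 → ℝ) (d : ℕ) (p : 𝓦 → Bool → 𝕐 → ℝ) (a : Bool) : ℝ :=
  ∑ w, margW p w * condMoment v d p a w


set_option linter.unusedSectionVars false
set_option linter.unusedVariables false

lemma margW_contam (p : 𝓦 → Bool → 𝕐 → ℝ) (wt : 𝓦) (at_ : Bool) (yt : 𝕐) (t : ℝ) (w : 𝓦) :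
    margW (contam p (wt, at_, yt) t) w
      = t * (if w = wt then 1 else 0) + (1 - t) * margW p w := by
  simp only [margW, contam, Finset.sum_add_distrib, ← Finset.mul_sum, Prod.mk.injEq]
  by_cases h : w = wt
  · cases at_ <;> simp [h, Finset.filter_eq']
  · simp [h]

lemma margWA_contam (p : 𝓦 → Bool → 𝕐 → ℝ) (wt : 𝓦) (at_ : Bool) (yt : 𝕐) (t : ℝ)
    (w : 𝓦) (b : Bool) :
    margWA (contam p (wt, at_, yt) t) w b
      = t * (if w = wt ∧ b = at_ then 1 else 0) + (1 - t) * margWA p w b := by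
  simp only [margWA, contam, Finset.sum_add_distrib, ← Finset.mul_sum, Prod.mk.injEq]
  by_cases h : w = wt ∧ b = at_
  · simp [h.1, h.2]
  · rcases not_and_or.mp h with h' | h' <;> simp [h']

lemma num_contam (v : 𝕐 → ℝ) (d : ℕ) (p : 𝓦 → Bool → 𝕐 → ℝ) (wt : 𝓦) (at_ : Bool) (yt : 𝕐)
    (t : ℝ) (w : 𝓦) (b : Bool) :
    ∑ y, v y ^ d * contam p (wt, at_, yt) t w b y
      = t * (if w = wt ∧ b = at_ then v yt ^ d else 0)
        + (1 - t) * ∑ y, v y ^ d * p w b y := by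
  simp only [contam, mul_add, Finset.sum_add_distrib, Prod.mk.injEq]
  congr 1
  · by_cases h : w = wt ∧ b = at_
    · simp only [h.1, h.2, true_and]
      rw [Finset.sum_congr rfl (fun y _ => by rw [mul_ite, mul_one, mul_zero, mul_comm])]
      simp [Finset.sum_ite_eq', mul_comm]
    · rcases not_and_or.mp h with h' | h' <;> simp [h']
  · rw [Finset.mul_sum]; exact Finset.sum_congr rfl fun y _ => by ring

lemma hlin (c m : ℝ) : HasDerivAt (fun t : ℝ => t * c + (1 - t) * m) (c - m) 0 := by
  have h := ((hasDerivAt_id (0:ℝ)).mul_const c).add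
    (((hasDerivAt_const (0:ℝ) (1:ℝ)).sub (hasDerivAt_id (0:ℝ))).mul_const m)
  have h2 : HasDerivAt (fun t : ℝ => t * c + (1 - t) * m) (1 * c + (0 - 1) * m) 0 := h
  convert h2 using 1; ring

lemma margW_eq (p : 𝓦 → Bool → 𝕐 → ℝ) (w : 𝓦) :
    margW p w = margWA p w true + margWA p w false := by
  simp [margW, margWA, Fintype.sum_bool]

/-- Pathwise derivative of the `d`-th conditional-moment functional under point-mass
contamination: for `μᵈ(P) = E_P[E_P[Yᵈ | W, A = a]]` and the mixture path
`P_t = t·δ_{õ} + (1−t)·P` with `õ = (w̃, ã, ỹ)` in the support of `P`, the derivative at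
`t = 0` equals
`I(ã=a)·(ỹᵈ − Q̄ᵈ(w̃,a))/(I(a=1)g(w̃) + I(a=0)(1−g(w̃))) + Q̄ᵈ(w̃,a) − μᵈ(P)`,
in the discrete (finitely supported) setting. -/
theorem stmt_15 (v : 𝕐 → ℝ) (p : 𝓦 → Bool → 𝕐 → ℝ)
    (hp0 : ∀ w b y, 0 ≤ p w b y) (hp1 : ∑ w, ∑ b, ∑ y, p w b y = 1)
    (hpos : ∀ w b, 0 < margWA p w b)
    (wt : 𝓦) (at_ : Bool) (yt : 𝕐) (hsupp : 0 < p wt at_ yt)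
    (a : Bool) (d : ℕ) :
    HasDerivAt (fun t : ℝ => momFunctional v d (contam p (wt, at_, yt) t) a)
      ((if at_ = a then (1 : ℝ) else 0) * ((v yt) ^ d - condMoment v d p a wt)
          / (if a then propScore p wt else 1 - propScore p wt)
        + condMoment v d p a wt - momFunctional v d p a) 0 := by
  classical
  set N : 𝓦 → ℝ := fun w => ∑ y, v y ^ d * p w a y with hNdef
  set D : 𝓦 → ℝ := fun w => margWA p w a with hDdef
  set M : 𝓦 → ℝ := fun w => margW p w with hMdef
  set cM : 𝓦 → ℝ := fun w => if w = wt then 1 else 0 with hcMdef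
  set cN : 𝓦 → ℝ := fun w => if w = wt ∧ a = at_ then v yt ^ d else 0 with hcNdef
  set cD : 𝓦 → ℝ := fun w => if w = wt ∧ a = at_ then 1 else 0 with hcDdef
  have hD0 : ∀ w, D w ≠ 0 := fun w => (hpos w a).ne'
  have hfun : (fun t : ℝ => momFunctional v d (contam p (wt, at_, yt) t) a)
      = fun t => ∑ w, (t * cM w + (1 - t) * M w)
          * ((t * cN w + (1 - t) * N w) / (t * cD w + (1 - t) * D w)) := by
    funext t
    unfold momFunctional condMoment
    refine Finset.sum_congr rfl fun w _ => ?_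
    rw [margW_contam, num_contam, margWA_contam]
  have hterm : ∀ w : 𝓦, HasDerivAt
      (fun t : ℝ => (t * cM w + (1 - t) * M w)
          * ((t * cN w + (1 - t) * N w) / (t * cD w + (1 - t) * D w)))
      ((cM w - M w) * (N w / D w)
        + M w * (((cN w - N w) * D w - N w * (cD w - D w)) / D w ^ 2)) 0 := by
    intro w
    have h1 := hlin (cN w) (N w)
    have h2 := hlin (cD w) (D w)
    have h3 := hlin (cM w) (M w)
    have hdiv := h1.div h2 (by simpa using hD0 w)
    have hh := h3.mul hdiv
    convert hh using 1
    · rfl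
    · rfl
    · rfl
    norm_num
  have hsum := HasDerivAt.sum (fun w (_ : w ∈ Finset.univ) => hterm w)
  rw [hfun]
  convert hsum using 1
  · rfl
  · rfl
  · ext t; simp [Finset.sum_apply]
  -- value equality
  have hMpos : (0:ℝ) < M wt := by
    have h1 := hpos wt true; have h2 := hpos wt false
    have := margW_eq p wt
    simp only [hMdef]
    linarith
  have hMne : margW p wt ≠ 0 := hMpos.ne'
  have hden : (if a then propScore p wt else 1 - propScore p wt) = D wt / M wt := by
    cases a
    · simp only [Bool.false_eq_true, if_false]
      show 1 - propScore p wt = margWA p wt false / margW p wt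
      unfold propScore
      rw [eq_div_iff hMne, sub_mul, one_mul, div_mul_cancel₀ _ hMne]
      linarith [margW_eq p wt]
    · simp only [if_true]
      rfl
  have hS1 : ∑ w, (cM w - M w) * (N w / D w)
      = N wt / D wt - momFunctional v d p a := by
    rw [Finset.sum_congr rfl (fun w _ => sub_mul (cM w) (M w) (N w / D w)),
      Finset.sum_sub_distrib]
    have h1 : ∑ w, cM w * (N w / D w) = N wt / D wt := by
      simp [hcMdef, ite_mul, Finset.sum_ite_eq']
    rw [h1]
    rfl
  have hS2 : ∑ w, M w * (((cN w - N w) * D w - N w * (cD w - D w)) / D w ^ 2)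
      = (if at_ = a then (1:ℝ) else 0) * ((v yt) ^ d - N wt / D wt) * (M wt / D wt) := by
    rw [Finset.sum_eq_single_of_mem wt (Finset.mem_univ wt)]
    · by_cases hA : at_ = a
      · have h1 : cN wt = v yt ^ d := by simp [hcNdef, hA.symm]
        have h2 : cD wt = 1 := by simp [hcDdef, hA.symm]
        rw [h1, h2, if_pos hA]
        have hD := hD0 wt
        field_simp
        ring
      · have hA' : ¬ (a = at_) := fun h => hA h.symm
        have h1 : cN wt = 0 := by simp [hcNdef, hA']
        have h2 : cD wt = 0 := by simp [hcDdef, hA']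
        rw [h1, h2, if_neg hA]
        have hz : ((0:ℝ) - N wt) * D wt - N wt * (0 - D wt) = 0 := by ring
        rw [hz]
        simp
    · intro w _ hw
      have : cN w = 0 := by simp [hcNdef, hw]
      have h2 : cD w = 0 := by simp [hcDdef, hw]
      rw [this, h2]
      have hz : ((0:ℝ) - N w) * D w - N w * (0 - D w) = 0 := by ring
      rw [hz]; simp
  rw [Finset.sum_add_distrib, hS1, hS2, hden]
  have hQ : condMoment v d p a wt = N wt / D wt := rfl
  rw [hQ]
  by_cases hA : at_ = a
  · simp only [if_pos hA]
    rw [div_div_eq_mul_div]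
    ring
  · simp only [if_neg hA]
    ring

end PointMass
end
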